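/- There exists a constant C > 0 such that for all real numbers a, b: |f(a + b) − f(a) − f′(a) · b − (1/2) f″(a) · b²| ≤ C |b|^{7/3}. -/

import Mathlib

/-- The nonlinearity `f(u) = |u|^{4/3} u`. -/
noncomputable def fnl (u : ℝ) : ℝ := |u| ^ ((4 : ℝ) / 3) * u

/-- `f'(u) = (7/3) |u|^{4/3}`. -/
noncomputable def fnl' (u : ℝ) : ℝ := (7 / 3) * |u| ^ ((4 : ℝ) / 3)

/-- `f''(u) = (28/9) sgn(u) |u|^{1/3}` (with `f''(0) = 0`). -/
noncomputable def fnl'' (u : ℝ) : ℝ := (28 / 9) * Real.sign u * |u| ^ ((1 : ℝ) / 3)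

lemma hasDerivAt_fnl (x : ℝ) : HasDerivAt fnl (fnl' x) x := by
  rcases lt_trichotomy x 0 with hx | rfl | hx
  · have h1 : HasDerivAt (fun u : ℝ => (-u) ^ ((4:ℝ)/3) * u)
        (((4:ℝ)/3 * (-x) ^ ((4:ℝ)/3 - 1) * (-1)) * x + (-x) ^ ((4:ℝ)/3) * 1) x := by
      exact (((Real.hasDerivAt_rpow_const (Or.inl (neg_ne_zero.mpr hx.ne))).comp x
        (hasDerivAt_neg x))).mul (hasDerivAt_id x)
    have heq : fnl =ᶠ[nhds x] (fun u : ℝ => (-u) ^ ((4:ℝ)/3) * u) := by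
      filter_upwards [eventually_lt_nhds hx] with u hu
      simp [fnl, abs_of_neg hu]
    have h2 := h1.congr_of_eventuallyEq heq
    refine h2.congr_deriv ?_
    have hx' : (0:ℝ) < -x := by linarith
    have key : (-x) ^ ((1:ℝ)/3) * (-x) = (-x) ^ ((4:ℝ)/3) := by
      rw [show (4:ℝ)/3 = 1/3 + 1 by norm_num, Real.rpow_add hx', Real.rpow_one]
    have key2 : (-x) ^ ((4:ℝ)/3 - 1) = (-x) ^ ((1:ℝ)/3) := by norm_num
    rw [fnl', abs_of_neg hx, key2]
    nlinarith [key]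
  · have h0 : fnl' 0 = 0 := by
      simp [fnl', Real.zero_rpow (by norm_num : ((4:ℝ)/3) ≠ 0)]
    rw [h0]
    rw [hasDerivAt_iff_tendsto_slope]
    have hcont : Filter.Tendsto (fun t : ℝ => |t| ^ ((4:ℝ)/3)) (nhds 0) (nhds 0) := by
      have : ContinuousAt (fun t : ℝ => |t| ^ ((4:ℝ)/3)) 0 := by
        exact (Real.continuousAt_rpow_const _ _ (Or.inr (by norm_num))).comp
          continuous_abs.continuousAt
      have h00 : |(0:ℝ)| ^ ((4:ℝ)/3) = 0 := by
        simp [Real.zero_rpow (by norm_num : ((4:ℝ)/3) ≠ 0)]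
      simpa [h00] using this.tendsto
    refine ((hcont.mono_left nhdsWithin_le_nhds).congr' ?_)
    filter_upwards [self_mem_nhdsWithin] with t ht
    have ht' : t ≠ 0 := ht
    simp only [slope_def_field, fnl]
    field_simp
    simp
  · have h1 : HasDerivAt (fun u : ℝ => u ^ ((7:ℝ)/3)) ((7:ℝ)/3 * x ^ ((7:ℝ)/3 - 1)) x :=
      Real.hasDerivAt_rpow_const (Or.inl hx.ne')
    have heq : fnl =ᶠ[nhds x] (fun u : ℝ => u ^ ((7:ℝ)/3)) := by
      filter_upwards [eventually_gt_nhds hx] with u hu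
      rw [fnl, abs_of_pos hu, show (7:ℝ)/3 = 4/3 + 1 by norm_num, Real.rpow_add hu,
        Real.rpow_one]
    have h2 := h1.congr_of_eventuallyEq heq
    refine h2.congr_deriv ?_
    rw [fnl', abs_of_pos hx]
    norm_num

lemma hasDerivAt_fnl' (x : ℝ) : HasDerivAt fnl' (fnl'' x) x := by
  rcases lt_trichotomy x 0 with hx | rfl | hx
  · have h1 : HasDerivAt (fun u : ℝ => (7:ℝ)/3 * (-u) ^ ((4:ℝ)/3))
        ((7:ℝ)/3 * ((4:ℝ)/3 * (-x) ^ ((4:ℝ)/3 - 1) * (-1))) x := by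
      exact ((Real.hasDerivAt_rpow_const (Or.inl (neg_ne_zero.mpr hx.ne))).comp x
        (hasDerivAt_neg x)).const_mul _
    have heq : fnl' =ᶠ[nhds x] (fun u : ℝ => (7:ℝ)/3 * (-u) ^ ((4:ℝ)/3)) := by
      filter_upwards [eventually_lt_nhds hx] with u hu
      simp [fnl', abs_of_neg hu]
    have h2 := h1.congr_of_eventuallyEq heq
    refine h2.congr_deriv ?_
    rw [fnl'', abs_of_neg hx, Real.sign_of_neg hx]
    have key2 : (-x) ^ ((4:ℝ)/3 - 1) = (-x) ^ ((1:ℝ)/3) := by norm_num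
    rw [key2]; ring
  · have h0 : fnl'' 0 = 0 := by simp [fnl'']
    rw [h0]
    rw [hasDerivAt_iff_tendsto_slope]
    have hcont : Filter.Tendsto (fun t : ℝ => (7:ℝ)/3 * |t| ^ ((1:ℝ)/3)) (nhds 0) (nhds 0) := by
      have : ContinuousAt (fun t : ℝ => |t| ^ ((1:ℝ)/3)) 0 := by
        exact (Real.continuousAt_rpow_const _ _ (Or.inr (by norm_num))).comp
          continuous_abs.continuousAt
      have h00 : |(0:ℝ)| ^ ((1:ℝ)/3) = 0 := by
        simp [Real.zero_rpow (by norm_num : ((1:ℝ)/3) ≠ 0)]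
      have := (this.tendsto.const_mul ((7:ℝ)/3))
      simpa [h00] using this
    refine squeeze_zero_norm' ?_ (hcont.mono_left nhdsWithin_le_nhds)
    filter_upwards [self_mem_nhdsWithin] with t ht
    have ht' : (t:ℝ) ≠ 0 := ht
    have habs : |t| ^ ((4:ℝ)/3) = |t| ^ ((1:ℝ)/3) * |t| := by
      rw [show (4:ℝ)/3 = 1/3 + 1 by norm_num, Real.rpow_add (abs_pos.mpr ht'), Real.rpow_one]
    have h0' : fnl' 0 = 0 := by
      simp [fnl', Real.zero_rpow (by norm_num : ((4:ℝ)/3) ≠ 0)]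
    rw [Real.norm_eq_abs, slope_def_field, h0', fnl', sub_zero, sub_zero]
    have h1 : |((7:ℝ)/3 * |t| ^ ((4:ℝ)/3)) / t| = (7:ℝ)/3 * |t| ^ ((4:ℝ)/3) / |t| := by
      rw [abs_div, abs_of_nonneg (by positivity)]
    rw [h1, habs]
    rw [show (7:ℝ)/3 * (|t| ^ ((1:ℝ)/3) * |t|) / |t| = 7/3 * |t| ^ ((1:ℝ)/3) * (|t|/|t|) by ring,
      div_self (abs_ne_zero.mpr ht'), mul_one]

  · have h1 : HasDerivAt (fun u : ℝ => (7:ℝ)/3 * u ^ ((4:ℝ)/3))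
        ((7:ℝ)/3 * ((4:ℝ)/3 * x ^ ((4:ℝ)/3 - 1))) x :=
      (Real.hasDerivAt_rpow_const (Or.inl hx.ne')).const_mul _
    have heq : fnl' =ᶠ[nhds x] (fun u : ℝ => (7:ℝ)/3 * u ^ ((4:ℝ)/3)) := by
      filter_upwards [eventually_gt_nhds hx] with u hu
      simp [fnl', abs_of_pos hu]
    have h2 := h1.congr_of_eventuallyEq heq
    refine h2.congr_deriv ?_
    rw [fnl'', abs_of_pos hx, Real.sign_of_pos hx]
    have key2 : x ^ ((4:ℝ)/3 - 1) = x ^ ((1:ℝ)/3) := by norm_num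
    rw [key2]; ring

lemma cbrt_add (x y : ℝ) (hx : 0 ≤ x) (hy : 0 ≤ y) :
    (x + y) ^ ((1:ℝ)/3) ≤ x ^ ((1:ℝ)/3) + y ^ ((1:ℝ)/3) := by
  have h := NNReal.rpow_add_le_add_rpow x.toNNReal y.toNNReal
    (by norm_num : (0:ℝ) ≤ 1/3) (by norm_num : (1:ℝ)/3 ≤ 1)
  have := NNReal.coe_le_coe.mpr h
  push_cast at this
  rwa [Real.coe_toNNReal x hx, Real.coe_toNNReal y hy] at this

lemma cbrt_sub (x y : ℝ) (hy : 0 ≤ y) (hxy : y ≤ x) :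
    x ^ ((1:ℝ)/3) - y ^ ((1:ℝ)/3) ≤ (x - y) ^ ((1:ℝ)/3) := by
  have h := cbrt_add y (x - y) hy (by linarith)
  rw [add_sub_cancel] at h
  linarith

lemma sign_cbrt_nonneg (x : ℝ) (hx : 0 ≤ x) :
    Real.sign x * |x| ^ ((1:ℝ)/3) = x ^ ((1:ℝ)/3) := by
  rcases hx.eq_or_lt with rfl | hx'
  · simp [Real.zero_rpow (by norm_num : ((1:ℝ)/3) ≠ 0)]
  · rw [Real.sign_of_pos hx', abs_of_pos hx', one_mul]

lemma cbrt_holder_aux (x y : ℝ) (hxy : y ≤ x) :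
    |Real.sign x * |x| ^ ((1:ℝ)/3) - Real.sign y * |y| ^ ((1:ℝ)/3)|
      ≤ 2 * |x - y| ^ ((1:ℝ)/3) := by
  rcases le_or_gt 0 y with hy | hy
  · -- 0 ≤ y ≤ x
    rw [sign_cbrt_nonneg x (hy.trans hxy), sign_cbrt_nonneg y hy,
      abs_of_nonneg (sub_nonneg.mpr (Real.rpow_le_rpow hy hxy (by norm_num))),
      abs_of_nonneg (by linarith)]
    have := cbrt_sub x y hy hxy
    have h2 : (0:ℝ) ≤ (x - y) ^ ((1:ℝ)/3) := Real.rpow_nonneg (by linarith) _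
    linarith
  · rcases le_or_gt 0 x with hx | hx
    · -- y < 0 ≤ x
      rw [sign_cbrt_nonneg x hx, Real.sign_of_neg hy, abs_of_neg hy]
      have h1 : x ^ ((1:ℝ)/3) ≤ (x - y) ^ ((1:ℝ)/3) :=
        Real.rpow_le_rpow hx (by linarith) (by norm_num)
      have h2 : (-y) ^ ((1:ℝ)/3) ≤ (x - y) ^ ((1:ℝ)/3) :=
        Real.rpow_le_rpow (by linarith) (by linarith) (by norm_num)
      have hx3 : (0:ℝ) ≤ x ^ ((1:ℝ)/3) := Real.rpow_nonneg hx _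
      have hy3 : (0:ℝ) ≤ (-y) ^ ((1:ℝ)/3) := Real.rpow_nonneg (by linarith) _
      rw [abs_of_nonneg (by linarith : (0:ℝ) ≤ x - y)]
      rw [abs_of_nonneg (by nlinarith : (0:ℝ) ≤ x ^ ((1:ℝ)/3) - -1 * (-y) ^ ((1:ℝ)/3))]
      linarith
    · -- y ≤ x < 0
      rw [Real.sign_of_neg hx, Real.sign_of_neg hy, abs_of_neg hx, abs_of_neg hy]
      have hkey := cbrt_sub (-y) (-x) (by linarith) (by linarith)
      have hmono : (-x) ^ ((1:ℝ)/3) ≤ (-y) ^ ((1:ℝ)/3) :=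
        Real.rpow_le_rpow (by linarith) (by linarith) (by norm_num)
      rw [abs_of_nonneg (by linarith : (0:ℝ) ≤ -1 * (-x) ^ ((1:ℝ)/3) - -1 * (-y) ^ ((1:ℝ)/3)),
        abs_of_nonneg (by linarith : (0:ℝ) ≤ x - y)]
      have : -y - -x = x - y := by ring
      rw [this] at hkey
      have h2 : (0:ℝ) ≤ (x - y) ^ ((1:ℝ)/3) := Real.rpow_nonneg (by linarith) _
      linarith

lemma fnl''_holder (x y : ℝ) : |fnl'' x - fnl'' y| ≤ (56/9) * |x - y| ^ ((1:ℝ)/3) := by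
  have key : ∀ u v : ℝ, v ≤ u →
      |fnl'' u - fnl'' v| ≤ (56/9) * |u - v| ^ ((1:ℝ)/3) := by
    intro u v huv
    have := cbrt_holder_aux u v huv
    have heq : fnl'' u - fnl'' v
        = (28/9) * (Real.sign u * |u| ^ ((1:ℝ)/3) - Real.sign v * |v| ^ ((1:ℝ)/3)) := by
      rw [fnl'', fnl'']; ring
    rw [heq, abs_mul, abs_of_nonneg (by norm_num : (0:ℝ) ≤ 28/9)]
    nlinarith
  rcases le_total y x with h | h
  · exact key x y h
  · have := key y x h
    rwa [abs_sub_comm, abs_sub_comm y x] at this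

theorem stmt_6 :
    ∃ C > (0 : ℝ), ∀ a b : ℝ,
      |fnl (a + b) - fnl a - fnl' a * b - (1 / 2) * fnl'' a * b ^ 2| ≤
        C * |b| ^ ((7 : ℝ) / 3) := by
  refine ⟨56/9, by norm_num, fun a b => ?_⟩
  rcases eq_or_ne b 0 with rfl | hb
  · simp [Real.zero_rpow (by norm_num : ((7:ℝ)/3) ≠ 0)]
  have hconv : Convex ℝ (Set.uIcc (0:ℝ) b) := convex_uIcc 0 b
  have h0s : (0:ℝ) ∈ Set.uIcc (0:ℝ) b := Set.left_mem_uIcc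
  have hbs : b ∈ Set.uIcc (0:ℝ) b := Set.right_mem_uIcc
  have habs : ∀ t ∈ Set.uIcc (0:ℝ) b, |t| ≤ |b| := by
    intro t ht
    rcases le_total 0 b with h | h
    · rw [Set.uIcc_of_le h] at ht
      rw [abs_of_nonneg ht.1, abs_of_nonneg h]; exact ht.2
    · rw [Set.uIcc_of_ge h] at ht
      rw [abs_of_nonpos ht.2, abs_of_nonpos h]; linarith [ht.1]
  set g1 : ℝ → ℝ := fun t => fnl' (a + t) - fnl' a - fnl'' a * t with hg1def
  have hg1deriv : ∀ t : ℝ, HasDerivAt g1 (fnl'' (a + t) - fnl'' a) t := by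
    intro t
    have h1 : HasDerivAt (fun t : ℝ => fnl' (a + t)) (fnl'' (a + t)) t := by
      have := (hasDerivAt_fnl' (a + t)).comp t ((hasDerivAt_id t).const_add a)
      rw [mul_one] at this
      exact this
    have h2 : HasDerivAt (fun t : ℝ => fnl'' a * t) (fnl'' a) t := by
      simpa using (hasDerivAt_id t).const_mul (fnl'' a)
    exact (h1.sub_const (fnl' a)).sub h2
  have hbound1 : ∀ t ∈ Set.uIcc (0:ℝ) b,
      ‖fnl'' (a + t) - fnl'' a‖ ≤ (56/9) * |b| ^ ((1:ℝ)/3) := by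
    intro t ht
    have h := fnl''_holder (a + t) a
    rw [add_sub_cancel_left] at h
    rw [Real.norm_eq_abs]
    refine h.trans ?_
    have : |t| ^ ((1:ℝ)/3) ≤ |b| ^ ((1:ℝ)/3) :=
      Real.rpow_le_rpow (abs_nonneg t) (habs t ht) (by norm_num)
    nlinarith [Real.rpow_nonneg (abs_nonneg t) ((1:ℝ)/3)]
  have key1 : ∀ t ∈ Set.uIcc (0:ℝ) b, ‖g1 t‖ ≤ (56/9) * |b| ^ ((1:ℝ)/3) * |b| := by
    intro t ht
    have h := hconv.norm_image_sub_le_of_norm_hasDerivWithin_le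
      (fun u _ => (hg1deriv u).hasDerivWithinAt) hbound1 h0s ht
    have hg10 : g1 0 = 0 := by simp [hg1def]
    rw [hg10, sub_zero, sub_zero] at h
    refine h.trans ?_
    have hC : (0:ℝ) ≤ (56/9) * |b| ^ ((1:ℝ)/3) := by positivity
    rw [Real.norm_eq_abs]
    exact mul_le_mul_of_nonneg_left (habs t ht) hC
  set g2 : ℝ → ℝ :=
    fun t => fnl (a + t) - fnl a - fnl' a * t - (1/2) * fnl'' a * t^2 with hg2def
  have hg2deriv : ∀ t : ℝ, HasDerivAt g2 (g1 t) t := by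
    intro t
    have h1 : HasDerivAt (fun t : ℝ => fnl (a + t)) (fnl' (a + t)) t := by
      have := (hasDerivAt_fnl (a + t)).comp t ((hasDerivAt_id t).const_add a)
      rw [mul_one] at this
      exact this
    have h2 : HasDerivAt (fun t : ℝ => fnl' a * t) (fnl' a) t := by
      simpa using (hasDerivAt_id t).const_mul (fnl' a)
    have h3 : HasDerivAt (fun t : ℝ => (1/2) * fnl'' a * t^2)
        ((1/2) * fnl'' a * (2 * t)) t := by
      simpa using (hasDerivAt_pow 2 t).const_mul ((1/2) * fnl'' a)
    have := ((h1.sub_const (fnl a)).sub h2).sub h3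
    refine this.congr_deriv ?_
    rw [hg1def]; ring
  have key2 := hconv.norm_image_sub_le_of_norm_hasDerivWithin_le
    (fun u _ => (hg2deriv u).hasDerivWithinAt) key1 h0s hbs
  have hg20 : g2 0 = 0 := by simp [hg2def]
  rw [hg20, sub_zero, sub_zero, Real.norm_eq_abs, Real.norm_eq_abs] at key2
  have hbpos : (0:ℝ) < |b| := abs_pos.mpr hb
  have hpow : (56:ℝ)/9 * |b| ^ ((1:ℝ)/3) * |b| * |b| = 56/9 * |b| ^ ((7:ℝ)/3) := by
    rw [show (7:ℝ)/3 = 1/3 + 1 + 1 by norm_num, Real.rpow_add hbpos, Real.rpow_add hbpos,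
      Real.rpow_one]
    ring
  calc |fnl (a + b) - fnl a - fnl' a * b - (1 / 2) * fnl'' a * b ^ 2| = |g2 b| := by
        rw [hg2def]
    _ ≤ 56/9 * |b| ^ ((1:ℝ)/3) * |b| * |b| := key2
    _ = 56/9 * |b| ^ ((7:ℝ)/3) := hpow
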